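/- arXiv:2509.02302 — 2 statements merged into one kernel-verified Lean document; each statement's English description precedes it below -/
import Mathlib

section
/- In the online lead-time quotation problem OLTQ with patience limit ℓ, changing the number of arrivals at a single period m from e_m to e'_m (with e_m, e'_m ∈ {0,…,ℓ}) changes the cumulative reward of any fixed action sequence by at most ℓ·|e_m - e'_m|: Val(OLTQ^I, e_m∘e_{m+1:n}, a_{m:n}) - Val(OLTQ^I, e'_m∘e_{m+1:n}, a_{m:n}) ≥ -ℓ·min(|e_m - e'_m|, ℓ). -/
/-!
At each period `t` the reward is earned by the first arrived request (in arrival order) whose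
quote is `t`, so a single period is worth at most `ℓ`. Changing `e m` only adds or removes the
requests `min (e m) (e' m) < i ≤ max (e m) (e' m)` of period `m`; a period whose reward changes
must be the quote of one of them, hence there are at most `|e m - e' m|` such periods, and at
most `ℓ` since quotes of period-`m` requests lie in `[m, m + ℓ)`.
-/

/-- Per-period reward of the online lead-time quotation (OLTQ) problem with patience
limit `ℓ` (see `Rolt` in the paper, Eq. (5)); `a s i = none` means an infinite quote. -/
def Rolt (ℓ : ℕ) (e : ℕ → ℕ) (a : ℕ → ℕ → Option ℕ) (t : ℕ) : ℕ :=
  ∑ s ∈ Finset.Icc 1 t, ∑ i ∈ Finset.Icc 1 (e s),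
    if a s i = some t ∧
        (∀ j ∈ Finset.Ico 1 s, ∀ k ∈ Finset.Icc 1 (e j), a j k ≠ some t) ∧
        (∀ k ∈ Finset.Ico 1 i, a s k ≠ some t)
    then s + ℓ - t else 0

open Finset

lemma Finset.forall_mem_Icc_one_iff_of_forall_mem_Ioc {p : ℕ → Prop} {b b' : ℕ}
    (h : ∀ i ∈ Ioc (min b b') (max b b'), p i) :
    (∀ k ∈ Icc 1 b, p k) ↔ ∀ k ∈ Icc 1 b', p k := by
  simp only [mem_Icc, mem_Ioc] at h ⊢
  constructor <;> intro H k hk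
  · by_cases hkb : k ≤ b
    exacts [H k ⟨hk.1, hkb⟩, h k ⟨by omega, by omega⟩]
  · by_cases hkb : k ≤ b'
    exacts [H k ⟨hk.1, hkb⟩, h k ⟨by omega, by omega⟩]

lemma Finset.sum_Icc_one_eq_of_forall_mem_Ioc {M : Type*} [AddCommMonoid M] {f : ℕ → M}
    {b b' : ℕ} (h : ∀ i ∈ Ioc (min b b') (max b b'), f i = 0) :
    ∑ i ∈ Icc 1 b, f i = ∑ i ∈ Icc 1 b', f i := by
  wlog hb : b ≤ b' generalizing b b'
  · exact (this (by rwa [min_comm, max_comm]) (le_of_not_ge hb)).symm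
  refine sum_subset (Icc_subset_Icc_right hb) fun i hi hib => h i ?_
  simp only [mem_Icc, not_and, not_le] at hi hib
  simp only [mem_Ioc, min_eq_left hb, max_eq_right hb]
  exact ⟨hib hi.1, hi.2⟩

lemma Finset.sum_le_sum_add_mul_card_filter_ne {ι : Type*} (s : Finset ι) (f g : ι → ℕ)
    {c : ℕ} (hg : ∀ i ∈ s, g i ≤ c) :
    ∑ i ∈ s, g i ≤ ∑ i ∈ s, f i + c * #(s.filter fun i => f i ≠ g i) := by
  classical
  rw [← sum_filter_not_add_sum_filter s (fun i => f i ≠ g i) g]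
  gcongr
  · calc ∑ i ∈ s with ¬f i ≠ g i, g i = ∑ i ∈ s with ¬f i ≠ g i, f i :=
          sum_congr rfl fun i hi => (not_not.mp (mem_filter.mp hi).2).symm
      _ ≤ ∑ i ∈ s, f i := sum_le_sum_of_subset (filter_subset _ s)
  · rw [mul_comm, ← smul_eq_mul]
    exact sum_le_card_nsmul _ _ _ fun i hi => hg i (mem_filter.mp hi).1

def IsFirstQuotedAt (e : ℕ → ℕ) (a : ℕ → ℕ → Option ℕ) (t s i : ℕ) : Prop :=
  a s i = some t ∧
    (∀ j ∈ Ico 1 s, ∀ k ∈ Icc 1 (e j), a j k ≠ some t) ∧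
    (∀ k ∈ Ico 1 i, a s k ≠ some t)

instance (e : ℕ → ℕ) (a : ℕ → ℕ → Option ℕ) (t s i : ℕ) :
    Decidable (IsFirstQuotedAt e a t s i) := by
  unfold IsFirstQuotedAt; infer_instance

section OLTQ

variable {ℓ : ℕ} {e e' : ℕ → ℕ} {a : ℕ → ℕ → Option ℕ} {t : ℕ}

lemma Rolt_eq_sum_ite (ℓ : ℕ) (e : ℕ → ℕ) (a : ℕ → ℕ → Option ℕ) (t : ℕ) :
    Rolt ℓ e a t = ∑ s ∈ Icc 1 t, ∑ i ∈ Icc 1 (e s),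
      if IsFirstQuotedAt e a t s i then s + ℓ - t else 0 :=
  rfl

lemma IsFirstQuotedAt.unique {s i s' i' : ℕ} (h : IsFirstQuotedAt e a t s i)
    (h' : IsFirstQuotedAt e a t s' i') (hs : 1 ≤ s) (hs' : 1 ≤ s') (hi : i ∈ Icc 1 (e s))
    (hi' : i' ∈ Icc 1 (e s')) : s = s' ∧ i = i' := by
  obtain ⟨ha, hearlier, hbefore⟩ := h
  obtain ⟨ha', hearlier', hbefore'⟩ := h'
  have hi₁ := (mem_Icc.mp hi).1
  have hi₁' := (mem_Icc.mp hi').1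
  rcases lt_trichotomy s s' with hlt | rfl | hgt
  · exact absurd ha (hearlier' s (mem_Ico.mpr ⟨hs, hlt⟩) i hi)
  · rcases lt_trichotomy i i' with hlt | rfl | hgt
    · exact absurd ha (hbefore' i (mem_Ico.mpr ⟨hi₁, hlt⟩))
    · exact ⟨rfl, rfl⟩
    · exact absurd ha' (hbefore i' (mem_Ico.mpr ⟨hi₁', hgt⟩))
  · exact absurd ha' (hearlier s' (mem_Ico.mpr ⟨hs', hgt⟩) i' hi')

lemma Rolt_le (ℓ : ℕ) (e : ℕ → ℕ) (a : ℕ → ℕ → Option ℕ) (t : ℕ) : Rolt ℓ e a t ≤ ℓ := by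
  set arrived := (Icc 1 t).sigma fun s => Icc 1 (e s)
  set first := arrived.filter fun p => IsFirstQuotedAt e a t p.1 p.2
  have hfirst : #first ≤ 1 := by
    refine card_le_one.mpr fun ⟨s, i⟩ hp ⟨s', i'⟩ hq => ?_
    simp only [first, arrived, mem_filter, mem_sigma, mem_Icc] at hp hq
    obtain ⟨rfl, rfl⟩ := hp.2.unique hq.2 hp.1.1.1 hq.1.1.1 (mem_Icc.mpr hp.1.2)
      (mem_Icc.mpr hq.1.2)
    rfl
  calc Rolt ℓ e a t = ∑ p ∈ first, (p.1 + ℓ - t) := by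
        rw [Rolt_eq_sum_ite, sum_sigma', sum_filter]
    _ ≤ #first • ℓ := sum_le_card_nsmul _ _ _ fun p hp => by
        have := (mem_Icc.mp (mem_sigma.mp (mem_filter.mp hp).1).1).2
        omega
    _ ≤ ℓ := by simpa using Nat.mul_le_mul_right ℓ hfirst

abbrev changedRequests (e e' : ℕ → ℕ) (m : ℕ) : Finset ℕ :=
  Ioc (min (e m) (e' m)) (max (e m) (e' m))

lemma Rolt_eq_of_forall_changedRequests_ne {m : ℕ} (hee : ∀ s, s ≠ m → e s = e' s)
    (h : ∀ i ∈ changedRequests e e' m, a m i ≠ some t) :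
    Rolt ℓ e a t = Rolt ℓ e' a t := by
  have hfirst : ∀ s i, IsFirstQuotedAt e a t s i ↔ IsFirstQuotedAt e' a t s i := by
    refine fun s i => and_congr Iff.rfl (and_congr (forall₂_congr fun j _ => ?_) Iff.rfl)
    by_cases hjm : j = m
    · subst hjm
      exact forall_mem_Icc_one_iff_of_forall_mem_Ioc h
    · rw [hee j hjm]
  simp only [Rolt_eq_sum_ite, hfirst]
  refine sum_congr rfl fun s _ => ?_
  by_cases hsm : s = m
  · subst hsm
    refine sum_Icc_one_eq_of_forall_mem_Ioc fun i hi => if_neg fun hc => h i hi ?_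
    exact ((hfirst s i).mpr hc).1
  · rw [hee s hsm]

lemma card_filter_Rolt_ne_le {m n : ℕ} (hrange : ∀ s i x, a s i = some x → s ≤ x ∧ x < s + ℓ)
    (hee : ∀ s, s ≠ m → e s = e' s) :
    #((Icc m n).filter fun t => Rolt ℓ e a t ≠ Rolt ℓ e' a t) ≤
      min (max (e m) (e' m) - min (e m) (e' m)) ℓ := by
  set D := (Icc m n).filter fun t => Rolt ℓ e a t ≠ Rolt ℓ e' a t
  have hquoted : ∀ t ∈ D, ∃ i ∈ changedRequests e e' m, a m i = some t := by
    intro t ht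
    by_contra! hno
    exact (mem_filter.mp ht).2 (Rolt_eq_of_forall_changedRequests_ne hee hno)
  refine le_min ?_ ?_
  · calc #D ≤ #((changedRequests e e' m).image fun i => (a m i).getD 0) :=
          card_le_card fun t ht => by
            obtain ⟨i, hi, hat⟩ := hquoted t ht
            exact mem_image.mpr ⟨i, hi, by rw [hat]; rfl⟩
      _ ≤ #(changedRequests e e' m) := card_image_le
      _ = _ := Nat.card_Ioc _ _
  · calc #D ≤ #(Ico m (m + ℓ)) := card_le_card fun t ht => by
          obtain ⟨i, -, hat⟩ := hquoted t ht
          exact mem_Ico.mpr (hrange m i t hat)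
      _ = ℓ := by simp

end OLTQ

theorem stmt_9_general (ℓ m n : ℕ)
    (e e' : ℕ → ℕ) (a : ℕ → ℕ → Option ℕ)
    (hrange : ∀ s i x, a s i = some x → s ≤ x ∧ x < s + ℓ)
    (hee : ∀ s, s ≠ m → e s = e' s) :
    ((∑ t ∈ Finset.Icc m n, Rolt ℓ e a t : ℕ) : ℝ)
        - ((∑ t ∈ Finset.Icc m n, Rolt ℓ e' a t : ℕ) : ℝ)
      ≥ -((ℓ : ℝ) * min |(e m : ℝ) - (e' m : ℝ)| (ℓ : ℝ)) := by
  set D := (Icc m n).filter fun t => Rolt ℓ e a t ≠ Rolt ℓ e' a t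
  have hsum : ∑ t ∈ Icc m n, Rolt ℓ e' a t ≤ ∑ t ∈ Icc m n, Rolt ℓ e a t + ℓ * #D :=
    sum_le_sum_add_mul_card_filter_ne _ _ _ fun t _ => Rolt_le ℓ e' a t
  have hcard : (#D : ℝ) ≤ min |(e m : ℝ) - (e' m : ℝ)| (ℓ : ℝ) := by
    rw [← max_sub_min_eq_abs', ← Nat.cast_max, ← Nat.cast_min, ← Nat.cast_sub min_le_max,
      ← Nat.cast_min]
    exact_mod_cast card_filter_Rolt_ne_le hrange hee
  have hsum' : ((∑ t ∈ Icc m n, Rolt ℓ e' a t : ℕ) : ℝ) ≤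
      ((∑ t ∈ Icc m n, Rolt ℓ e a t : ℕ) : ℝ) + ℓ * #D := by
    exact_mod_cast hsum
  have := mul_le_mul_of_nonneg_left hcard (Nat.cast_nonneg ℓ)
  linarith

/-- OLTQ is (1, ℓ)-Lipschitz: changing the number of arrivals at a single period `m`
from `e m` to `e' m` (both in {0,…,ℓ}) changes the cumulative reward of any fixed
action sequence over the window `m, …, n` by at most `ℓ·min(|e_m - e'_m|, ℓ)`. -/
theorem stmt_9 (ℓ m n : ℕ) (hℓ : 1 ≤ ℓ) (hm : 1 ≤ m)
    (e e' : ℕ → ℕ) (a : ℕ → ℕ → Option ℕ)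
    (he : ∀ s, e s ≤ ℓ) (he' : ∀ s, e' s ≤ ℓ)
    (hrange : ∀ s i x, a s i = some x → s ≤ x ∧ x < s + ℓ)
    (hee : ∀ s, s ≠ m → e s = e' s) :
    ((∑ t ∈ Finset.Icc m n, Rolt ℓ e a t : ℕ) : ℝ)
        - ((∑ t ∈ Finset.Icc m n, Rolt ℓ e' a t : ℕ) : ℝ)
      ≥ -((ℓ : ℝ) * min |(e m : ℝ) - (e' m : ℝ)| (ℓ : ℝ)) :=
  stmt_9_general ℓ m n e e' a hrange hee
end

section
/- In the online reusable resource allocation problem ORRA_n, changing the request at a single period m from e_m to e'_m while keeping the action sequence fixed changes the total number of fulfilled requests by at most 1: Val(ORRA_n^I, e_m∘e_{m+1:M}, a_{m:M}) ≥ Val(ORRA_n^I, e'_m∘e_{m+1:M}, a_{m:M}) - 1. Hence ORRA_n is (1,1)-strongly-Lipschitz under the discrete metric d(e, e') = I(e ≠ e'). -/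
/-- Next-availability times of the `n` reusable resources after `t` periods. -/
def Wt (n d : ℕ) (e : ℕ → Fin n → Bool) (a : ℕ → Option (Fin n)) :
    ℕ → Fin n → ℕ
  | 0 => fun _ => 1
  | t + 1 => fun i =>
      if a (t + 1) = some i ∧ Wt n d e a t i ≤ t + 1 ∧ e (t + 1) i = true
      then t + 1 + d else Wt n d e a t i

/-- Reward of ORRA_n at period `t`: `1` iff the request is successfully fulfilled. -/
def Rorra (n d : ℕ) (e : ℕ → Fin n → Bool) (a : ℕ → Option (Fin n)) (t : ℕ) : ℕ :=
  match a t with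
  | none => 0
  | some i => if Wt n d e a t i = t + d then 1 else 0

/-
Compare the runs under `e` and `e'` through the potential `aheadCount`, the number of resources
that are available strictly earlier in the primed run. Under a common request, a period can give
the primed run a reward the unprimed run misses only on a resource where the primed run was
ahead, and afterwards it no longer is; so "primed rewards + potential − unprimed rewards" never
increases, and it increases by at most one at a period whose request differs. Starting from the
common state before period `m`, where the potential vanishes, this bounds the excess by one.
-/

open Finset

lemma resource_step_le {N d w w' : ℕ} (hw : w ≤ N + d) (hw' : w' ≤ N + d) (c c' : Bool) :
    (if w' ≤ N + 1 ∧ c' = true then 1 else 0) +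
        (if (if w' ≤ N + 1 ∧ c' = true then N + 1 + d else w') <
            (if w ≤ N + 1 ∧ c = true then N + 1 + d else w) then 1 else 0) ≤
      (if w ≤ N + 1 ∧ c = true then 1 else 0) + (if w' < w then 1 else 0) +
        (if c = c' then 0 else 1) := by
  cases c <;> cases c' <;> simp only [Bool.false_eq_true, and_false, and_true, if_false] <;>
    split_ifs <;> omega

def aheadCount (n d : ℕ) (e e' : ℕ → Fin n → Bool) (a : ℕ → Option (Fin n)) (t : ℕ) : ℕ :=
  ∑ i, if Wt n d e' a t i < Wt n d e a t i then 1 else 0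

section

variable {n d : ℕ} {e e' : ℕ → Fin n → Bool} {a : ℕ → Option (Fin n)}

lemma Wt_le_add (hd : 1 ≤ d) (t : ℕ) (i : Fin n) : Wt n d e a t i ≤ t + d := by
  induction t with
  | zero => simp only [Wt]; omega
  | succ t ih =>
    simp only [Wt]
    split <;> omega

lemma Wt_succ_of_ne {t : ℕ} {i : Fin n} (h : a (t + 1) ≠ some i) :
    Wt n d e a (t + 1) i = Wt n d e a t i := by
  simp only [Wt, h, false_and, if_false]

lemma Wt_succ_of_eq {t : ℕ} {i : Fin n} (h : a (t + 1) = some i) :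
    Wt n d e a (t + 1) i =
      if Wt n d e a t i ≤ t + 1 ∧ e (t + 1) i = true then t + 1 + d else Wt n d e a t i := by
  simp only [Wt, h, true_and]

lemma Rorra_of_eq_none {t : ℕ} (h : a t = none) : Rorra n d e a t = 0 := by
  simp only [Rorra, h]

lemma Rorra_succ_of_eq (hd : 1 ≤ d) {t : ℕ} {i : Fin n} (h : a (t + 1) = some i) :
    Rorra n d e a (t + 1) = if Wt n d e a t i ≤ t + 1 ∧ e (t + 1) i = true then 1 else 0 := by
  have := Wt_le_add (e := e) (a := a) hd t i
  simp only [Rorra, h, Wt_succ_of_eq h]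
  split_ifs <;> omega

lemma Wt_congr {N : ℕ} (h : ∀ s ≤ N, e s = e' s) : Wt n d e a N = Wt n d e' a N := by
  induction N with
  | zero => rfl
  | succ N ih =>
    funext i
    simp only [Wt, ih fun s hs ↦ h s (by omega), h (N + 1) le_rfl]

lemma Rorra_succ_add_aheadCount_le (hd : 1 ≤ d) (N : ℕ) :
    Rorra n d e' a (N + 1) + aheadCount n d e e' a (N + 1) ≤
      Rorra n d e a (N + 1) + aheadCount n d e e' a N +
        if e (N + 1) = e' (N + 1) then 0 else 1 := by
  rcases ha : a (N + 1) with _ | i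
  · have hW : ∀ e₀ : ℕ → Fin n → Bool, Wt n d e₀ a (N + 1) = Wt n d e₀ a N := fun e₀ ↦
      funext fun j ↦ Wt_succ_of_ne (by simp [ha])
    simp only [Rorra_of_eq_none ha, aheadCount, hW]
    omega
  · have hrest : ∀ j ∈ univ.erase i,
        (if Wt n d e' a (N + 1) j < Wt n d e a (N + 1) j then 1 else 0) =
          if Wt n d e' a N j < Wt n d e a N j then 1 else 0 := fun j hj ↦ by
      have hne : a (N + 1) ≠ some j := by simpa [ha, eq_comm] using ne_of_mem_erase hj
      rw [Wt_succ_of_ne hne, Wt_succ_of_ne hne]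
    have hreq : (if e (N + 1) i = e' (N + 1) i then 0 else 1) ≤
        if e (N + 1) = e' (N + 1) then 0 else 1 := by
      split_ifs <;> simp_all
    have hstep := resource_step_le (Wt_le_add (e := e) (a := a) hd N i)
      (Wt_le_add (e := e') (a := a) hd N i) (e (N + 1) i) (e' (N + 1) i)
    simp only [aheadCount, ← add_sum_erase univ _ (mem_univ i), sum_congr rfl hrest,
      Rorra_succ_of_eq hd ha, Wt_succ_of_eq ha]
    omega

lemma sum_Rorra_add_aheadCount_le (hd : 1 ≤ d) {N₀ N : ℕ} (hN : N₀ ≤ N) :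
    ∑ t ∈ Ioc N₀ N, Rorra n d e' a t + aheadCount n d e e' a N ≤
      ∑ t ∈ Ioc N₀ N, Rorra n d e a t + aheadCount n d e e' a N₀ +
        ∑ t ∈ Ioc N₀ N, if e t = e' t then 0 else 1 := by
  induction N, hN using Nat.le_induction with
  | base => simp
  | succ N hN ih =>
    have := Rorra_succ_add_aheadCount_le (e := e) (e' := e') (a := a) hd N
    simp only [sum_Ioc_succ_top hN]
    omega

lemma sum_Rorra_le_of_Wt_eq (hd : 1 ≤ d) {N₀ : ℕ} (hW : Wt n d e a N₀ = Wt n d e' a N₀) (N : ℕ) :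
    ∑ t ∈ Ioc N₀ N, Rorra n d e' a t ≤
      ∑ t ∈ Ioc N₀ N, Rorra n d e a t + ∑ t ∈ Ioc N₀ N, if e t = e' t then 0 else 1 := by
  rcases le_or_gt N₀ N with hN | hN
  · have h₀ : aheadCount n d e e' a N₀ = 0 := by simp [aheadCount, hW]
    have := sum_Rorra_add_aheadCount_le (e := e) (e' := e') (a := a) hd hN
    omega
  · simp [Ioc_eq_empty_of_le hN.le]

end

/-- ORRA_n is (1,1)-strongly-Lipschitz (under the discrete metric on requests):
changing the request at a single period `m` while keeping the action sequence fixed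
changes the total number of fulfilled requests by at most 1. -/
theorem stmt_14 (n d : ℕ) (hd : 1 ≤ d) (m M : ℕ) (hm : 1 ≤ m)
    (e e' : ℕ → Fin n → Bool) (a : ℕ → Option (Fin n))
    (hee : ∀ s, s ≠ m → e s = e' s) :
    ((∑ t ∈ Finset.Icc m M, Rorra n d e a t : ℕ) : ℝ)
      ≥ ((∑ t ∈ Finset.Icc m M, Rorra n d e' a t : ℕ) : ℝ) - 1 := by
  obtain ⟨k, rfl⟩ := Nat.exists_eq_add_of_le' hm
  have hW : Wt n d e a k = Wt n d e' a k := Wt_congr fun s hs ↦ hee s (by omega)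
  have hdiff : ∑ t ∈ Ioc k M, (if e t = e' t then 0 else 1) ≤ 1 :=
    calc ∑ t ∈ Ioc k M, (if e t = e' t then 0 else 1)
        ≤ ∑ t ∈ {k + 1}, (if e t = e' t then 0 else 1) :=
          sum_le_sum_of_ne_zero fun t _ ht ↦ by
            simpa using not_imp_comm.mp (hee t) (by simpa using ht)
      _ ≤ 1 := by simp only [sum_singleton]; split_ifs <;> omega
  have := sum_Rorra_le_of_Wt_eq hd hW M
  rw [Icc_add_one_left_eq_Ioc, ge_iff_le, sub_le_iff_le_add]
  exact_mod_cast (by omega :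
    ∑ t ∈ Ioc k M, Rorra n d e' a t ≤ ∑ t ∈ Ioc k M, Rorra n d e a t + 1)
end
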